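/- Let T > 0 and ρ ∈ (−1,1). For t ∈ [0,T] set a(t) = sinh(T−t)/sinh(T), b(t) = sinh(t)/sinh(T), and v(t) = 2·sinh(T−t)·sinh(t)/sinh(T). Let Q_t be the pushforward of the product measure γ_ρ ⊗ N(0,1) on ℝ² × ℝ under the map ((x,z),w) ↦ a(t)·x + b(t)·z + √(v(t))·w. Then Q_t = N(0,1) for all t ∈ [0,T] if and only if ρ = exp(−T). -/

import Mathlib

/-!
The marginal `Q t` is the law of a linear combination of independent standard Gaussians, hence
the centred Gaussian of variance `a² + 2abρ + b² + v`. By the identity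
`sinh (x + y)² = sinh x² + sinh y² + 2 sinh x sinh y cosh (x + y)` at `x = T - t`, `y = t`, this
variance minus one equals `2 sinh (T - t) sinh t (ρ - e^{-T}) / sinh² T`, which vanishes for all
`t ∈ [0, T]` iff `ρ = e^{-T}` (evaluate at `t = T / 2` for the forward direction).
-/

open MeasureTheory ProbabilityTheory Real

/-- The centered Gaussian measure on `ℝ²` with covariance matrix `[[1, ρ], [ρ, 1]]`,
realized as the law of `(U, ρ·U + √(1-ρ²)·V)` for `U, V` independent standard Gaussians. -/
noncomputable def gaussianPair (ρ : ℝ) : Measure (ℝ × ℝ) :=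
  Measure.map (fun p : ℝ × ℝ => (p.1, ρ * p.1 + Real.sqrt (1 - ρ ^ 2) * p.2))
    ((gaussianReal 0 1).prod (gaussianReal 0 1))

open scoped NNReal

theorem MeasureTheory.Measure.map_prod_add_eq_conv {α β M : Type*}
    [MeasurableSpace α] [MeasurableSpace β] [AddMonoid M] [MeasurableSpace M] [MeasurableAdd₂ M]
    {f : α → M} {g : β → M}
    (hf : Measurable f) (hg : Measurable g) (μ : Measure α) (ν : Measure β)
    [SFinite μ] [SFinite ν] :
    (μ.prod ν).map (fun p => f p.1 + g p.2) = μ.map f ∗ ν.map g := by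
  rw [Measure.conv, Measure.map_prod_map μ ν hf hg, Measure.map_map (by fun_prop) (by fun_prop)]
  rfl

theorem gaussianReal_prod_map_linearCombination (m₁ m₂ : ℝ) (v₁ v₂ : ℝ≥0) (α β : ℝ) :
    ((gaussianReal m₁ v₁).prod (gaussianReal m₂ v₂)).map (fun p => α * p.1 + β * p.2) =
      gaussianReal (α * m₁ + β * m₂)
        (.mk (α ^ 2) (sq_nonneg _) * v₁ + .mk (β ^ 2) (sq_nonneg _) * v₂) := by
  rw [Measure.map_prod_add_eq_conv (measurable_const_mul α) (measurable_const_mul β),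
    gaussianReal_map_const_mul, gaussianReal_map_const_mul, gaussianReal_conv_gaussianReal]

instance (ρ : ℝ) : IsProbabilityMeasure (gaussianPair ρ) :=
  Measure.isProbabilityMeasure_map (by fun_prop)

theorem gaussianPair_map_linearCombination {ρ : ℝ} (hρ : ρ ^ 2 ≤ 1) (α β : ℝ) :
    (gaussianPair ρ).map (fun p => α * p.1 + β * p.2) =
      gaussianReal 0 (α ^ 2 + 2 * α * β * ρ + β ^ 2).toNNReal := by
  rw [gaussianPair, Measure.map_map (by fun_prop) (by fun_prop)]
  have hcomb : (fun p : ℝ × ℝ => α * p.1 + β * p.2) ∘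
      (fun p : ℝ × ℝ => (p.1, ρ * p.1 + √(1 - ρ ^ 2) * p.2)) =
      fun p => (α + β * ρ) * p.1 + β * √(1 - ρ ^ 2) * p.2 := by
    funext p; simp only [Function.comp_apply]; ring
  rw [hcomb, gaussianReal_prod_map_linearCombination, gaussianReal_ext_iff]
  refine ⟨by simp, ?_⟩
  ext
  simp only [NNReal.coe_add, NNReal.coe_mul, NNReal.coe_mk, NNReal.coe_one, mul_pow,
    sq_sqrt (sub_nonneg.2 hρ)]
  rw [Real.coe_toNNReal _ (by nlinarith [sq_nonneg (α * ρ + β)])]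
  ring

theorem gaussianPair_prod_map_linearCombination {ρ : ℝ} (hρ : ρ ^ 2 ≤ 1) (α β γ : ℝ) :
    ((gaussianPair ρ).prod (gaussianReal 0 1)).map
        (fun q : (ℝ × ℝ) × ℝ => α * q.1.1 + β * q.1.2 + γ * q.2) =
      gaussianReal 0 (α ^ 2 + 2 * α * β * ρ + β ^ 2 + γ ^ 2).toNNReal := by
  have hpair : Measurable fun p : ℝ × ℝ => α * p.1 + β * p.2 := by fun_prop
  rw [Measure.map_prod_add_eq_conv hpair (measurable_const_mul γ),
    gaussianPair_map_linearCombination hρ, gaussianReal_map_const_mul,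
    gaussianReal_conv_gaussianReal, gaussianReal_ext_iff]
  refine ⟨by simp, ?_⟩
  ext
  have hpos : 0 ≤ α ^ 2 + 2 * α * β * ρ + β ^ 2 := by nlinarith [sq_nonneg (α * ρ + β)]
  have hpos' : 0 ≤ α ^ 2 + 2 * α * β * ρ + β ^ 2 + γ ^ 2 := by positivity
  simp only [NNReal.coe_add, NNReal.coe_mk, mul_one, Real.coe_toNNReal _ hpos,
    Real.coe_toNNReal _ hpos']

theorem Real.sinh_add_sq (x y : ℝ) :
    sinh (x + y) ^ 2 = sinh x ^ 2 + sinh y ^ 2 + 2 * sinh x * sinh y * cosh (x + y) := by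
  rw [sinh_add, cosh_add]
  linear_combination sinh x ^ 2 * cosh_sq y + sinh y ^ 2 * cosh_sq x

theorem ouBridge_variance_sub_one {T : ℝ} (hT : sinh T ≠ 0) (ρ t : ℝ) :
    (sinh (T - t) / sinh T) ^ 2 + 2 * (sinh (T - t) / sinh T) * (sinh t / sinh T) * ρ +
        (sinh t / sinh T) ^ 2 + 2 * sinh (T - t) * sinh t / sinh T - 1 =
      2 * sinh (T - t) * sinh t * (ρ - exp (-T)) / sinh T ^ 2 := by
  have hsq := sinh_add_sq (T - t) t
  rw [sub_add_cancel] at hsq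
  rw [← cosh_sub_sinh]
  field_simp
  linear_combination -hsq

/-- The mixture of Ornstein--Uhlenbeck bridges with endpoints distributed as `γ_ρ` has
standard Gaussian marginals at every time `t ∈ [0,T]` if and only if `ρ = exp(-T)`. -/
theorem ou_bridge_mixture_invariant_iff (T : ℝ) (hT : 0 < T)
    (ρ : ℝ) (hρ : ρ ∈ Set.Ioo (-1 : ℝ) 1)
    (a b v : ℝ → ℝ)
    (ha : ∀ t, a t = Real.sinh (T - t) / Real.sinh T)
    (hb : ∀ t, b t = Real.sinh t / Real.sinh T)
    (hv : ∀ t, v t = 2 * Real.sinh (T - t) * Real.sinh t / Real.sinh T)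
    (Q : ℝ → Measure ℝ)
    (hQ : ∀ t, Q t = Measure.map
      (fun q : (ℝ × ℝ) × ℝ => a t * q.1.1 + b t * q.1.2 + Real.sqrt (v t) * q.2)
      ((gaussianPair ρ).prod (gaussianReal 0 1))) :
    (∀ t ∈ Set.Icc (0 : ℝ) T, Q t = gaussianReal 0 1) ↔ ρ = Real.exp (-T) := by
  have hsinhT : sinh T ≠ 0 := (sinh_pos_iff.2 hT).ne'
  have hρ2 : ρ ^ 2 ≤ 1 := by nlinarith [hρ.1, hρ.2]
  have hQ_iff : ∀ t ∈ Set.Icc 0 T, Q t = gaussianReal 0 1 ↔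
      2 * sinh (T - t) * sinh t * (ρ - exp (-T)) / sinh T ^ 2 = 0 := by
    intro t ⟨ht₀, htT⟩
    have hv_nonneg : 0 ≤ v t := by
      rw [hv]
      have hsinh_sub : 0 ≤ sinh (T - t) := sinh_nonneg_iff.2 (sub_nonneg.2 htT)
      have hsinh_t : 0 ≤ sinh t := sinh_nonneg_iff.2 ht₀
      have hsinh_T : 0 < sinh T := sinh_pos_iff.2 hT
      positivity
    rw [hQ, gaussianPair_prod_map_linearCombination hρ2, sq_sqrt hv_nonneg,
      gaussianReal_ext_iff, Real.toNNReal_eq_one, ← ouBridge_variance_sub_one hsinhT,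
      ← ha, ← hb, ← hv, sub_eq_zero]
    exact and_iff_right rfl
  constructor
  · intro h
    have hmid : T / 2 ∈ Set.Icc 0 T := ⟨by linarith, by linarith⟩
    have hsinh_mid : sinh (T / 2) ≠ 0 := (sinh_pos_iff.2 (by linarith)).ne'
    have hvar := (hQ_iff _ hmid).1 (h _ hmid)
    rw [show T - T / 2 = T / 2 by ring] at hvar
    simpa [hsinh_mid, hsinhT, sub_eq_zero] using hvar
  · intro h t ht
    rw [hQ_iff t ht, h, sub_self, mul_zero, zero_div]
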